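/- The function A(p) = (1 − 2p)(1 + 2pq)/(√(pq)(1 − 2pq)²), where q = 1 − p, is strictly decreasing on the interval (0, 0.5). -/

import Mathlib

/-!
Put `t = pq`, which increases from `0` to `1/4` as `p` runs over `(0, 1/2)`. Since
`(1 - 2p)² = 1 - 4t`, we get `A(p)² = (1 - 4t)(1 + 2t)² / (t(1 - 2t)⁴)`, a rational function of `t`
whose derivative `-(1 - 10t + 12t² + 104t³ + 64t⁴) / (t²(1 - 2t)⁵)` is negative on `(0, 1/4)`.
As `A > 0` on `(0, 1/2)`, `A` itself decreases.
-/

/-- `A(p) = (1 − 2p)(1 + 2pq)/(√(pq)(1 − 2pq)²)` with `q = 1 − p`. -/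
noncomputable def A (p : ℝ) : ℝ :=
  (1 - 2 * p) * (1 + 2 * p * (1 - p)) /
    (Real.sqrt (p * (1 - p)) * (1 - 2 * p * (1 - p)) ^ 2)

open Set

noncomputable def Asq (t : ℝ) : ℝ := (1 - 4 * t) * (1 + 2 * t) ^ 2 / (t * (1 - 2 * t) ^ 4)

lemma hasDerivAt_Asq {t : ℝ} (ht : t ≠ 0) (ht' : 1 - 2 * t ≠ 0) :
    HasDerivAt Asq
      (-(1 - 10 * t + 12 * t ^ 2 + 104 * t ^ 3 + 64 * t ^ 4) / (t ^ 2 * (1 - 2 * t) ^ 5)) t := by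
  have hsub : ∀ b : ℝ, HasDerivAt (fun t : ℝ => 1 - b * t) (-b) t := fun b => by
    simpa using ((hasDerivAt_id t).const_mul b).const_sub 1
  have hadd : HasDerivAt (fun t : ℝ => 1 + 2 * t) 2 t := by
    simpa using ((hasDerivAt_id t).const_mul 2).const_add 1
  have hnum := (hsub 4).fun_mul (hadd.fun_pow 2)
  have hden := (hasDerivAt_id' t).fun_mul ((hsub 2).fun_pow 4)
  refine (hnum.fun_div hden (by simp [ht, ht'])).congr_deriv ?_
  field_simp
  ring

lemma quartic_pos {t : ℝ} (h0 : 0 < t) (h1 : t < 1 / 4) :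
    0 < 1 - 10 * t + 12 * t ^ 2 + 104 * t ^ 3 + 64 * t ^ 4 := by
  nlinarith [sq_nonneg (1 - 5 * t), mul_pos h0 (sub_pos.2 h1), mul_pos (mul_pos h0 h0) h0]

lemma Asq_strictAntiOn : StrictAntiOn Asq (Ioo 0 (1 / 4)) := by
  have hderiv : ∀ t ∈ Ioo (0 : ℝ) (1 / 4), HasDerivAt Asq
      (-(1 - 10 * t + 12 * t ^ 2 + 104 * t ^ 3 + 64 * t ^ 4) / (t ^ 2 * (1 - 2 * t) ^ 5)) t :=
    fun t ht => hasDerivAt_Asq ht.1.ne' (by linarith [ht.2])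
  refine strictAntiOn_of_deriv_neg (convex_Ioo _ _)
    (fun t ht => (hderiv t ht).continuousAt.continuousWithinAt) (fun t ht => ?_)
  rw [interior_Ioo] at ht
  obtain ⟨ht0, ht1⟩ := ht
  have h2t : 0 < 1 - 2 * t := by linarith
  rw [(hderiv t ⟨ht0, ht1⟩).deriv, neg_div, neg_lt_zero]
  exact div_pos (quartic_pos ht0 ht1) (by positivity)

lemma A_pos {p : ℝ} (hp : p ∈ Ioo (0 : ℝ) (1 / 2)) : 0 < A p := by
  obtain ⟨hp0, hp1⟩ := hp
  have hpq : 0 < p * (1 - p) := mul_pos hp0 (by linarith)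
  have h2p : 0 < 1 - 2 * p := by linarith
  have h2pq : 0 < 1 - 2 * p * (1 - p) := by nlinarith
  exact div_pos (mul_pos h2p (by linarith)) (mul_pos (Real.sqrt_pos.2 hpq) (by positivity))

lemma A_sq {p : ℝ} (hpq : 0 ≤ p * (1 - p)) : A p ^ 2 = Asq (p * (1 - p)) := by
  rw [A, Asq, div_pow, mul_pow, mul_pow, Real.sq_sqrt hpq]
  ring

lemma strictMonoOn_mul_one_sub : StrictMonoOn (fun p : ℝ => p * (1 - p)) (Iio (1 / 2)) :=
  fun a ha b hb hab => by simp only [mem_Iio] at ha hb; nlinarith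

lemma mapsTo_mul_one_sub : MapsTo (fun p : ℝ => p * (1 - p)) (Ioo 0 (1 / 2)) (Ioo 0 (1 / 4)) :=
  fun p ⟨hp0, hp1⟩ => ⟨mul_pos hp0 (by linarith), by nlinarith [sq_nonneg (1 - 2 * p)]⟩

theorem A_strictAntiOn : StrictAntiOn A (Set.Ioo (0 : ℝ) 0.5) := by
  rw [show (0.5 : ℝ) = 1 / 2 by norm_num]
  have hAsq : StrictAntiOn (fun p => Asq (p * (1 - p))) (Ioo 0 (1 / 2)) :=
    Asq_strictAntiOn.comp_strictMonoOn (strictMonoOn_mul_one_sub.mono Ioo_subset_Iio_self)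
      mapsTo_mul_one_sub
  intro p hp q hq hpq
  refine lt_of_pow_lt_pow_left₀ 2 (A_pos hp).le ?_
  rw [A_sq (mapsTo_mul_one_sub hp).1.le, A_sq (mapsTo_mul_one_sub hq).1.le]
  exact hAsq hp hq hpq
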